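/- Let V be a vector space over ℂ and let d, δ : V → V be ℂ-linear maps with d ∘ d = 0, δ ∘ δ = 0 and d ∘ δ = −δ ∘ d, and let δ̄ denote the map induced by δ on W := V/range(d). Then the map induced in cohomology by the projection p : (V, δ) → (W, δ̄), from (ker δ)/range(δ) to (ker δ̄)/range(δ̄), is injective if and only if range(d) ∩ ker(δ) = range(d) ∩ range(δ). -/
import Mathlib


open LinearMap

variable {V : Type*} [AddCommGroup V] [Module ℂ V]

/-- The map `δ̄` induced by `δ` on the quotient `W = V / range d`; it is well defined
because `d ∘ δ = -(δ ∘ d)` implies `δ (range d) ⊆ range d`. -/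
noncomputable def deltaBar (d δ : V →ₗ[ℂ] V) (hanti : d ∘ₗ δ = -(δ ∘ₗ d)) :
    (V ⧸ LinearMap.range d) →ₗ[ℂ] (V ⧸ LinearMap.range d) :=
  Submodule.mapQ _ _ δ (by
    rintro x ⟨y, rfl⟩
    have h1 : d (δ y) = -(δ (d y)) := by
      have := congrArg (fun f : V →ₗ[ℂ] V => f y) hanti
      simpa using this
    refine Submodule.mem_comap.2 ⟨-(δ y), ?_⟩
    simp [h1])

/-- The map from `ker δ` to `ker δ̄` induced by the projection `V → V / range d`. -/
noncomputable def kerProj (d δ : V →ₗ[ℂ] V) (hanti : d ∘ₗ δ = -(δ ∘ₗ d)) :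
    (LinearMap.ker δ : Submodule ℂ V) →ₗ[ℂ]
      (LinearMap.ker (deltaBar d δ hanti) : Submodule ℂ (V ⧸ LinearMap.range d)) :=
  LinearMap.codRestrict _
    ((LinearMap.range d).mkQ ∘ₗ (LinearMap.ker δ).subtype)
    (fun x => by
      have hx : δ (x : V) = 0 := x.2
      simp only [LinearMap.mem_ker, LinearMap.comp_apply, Submodule.coe_subtype,
        Submodule.mkQ_apply]
      rw [deltaBar, Submodule.mapQ_apply, hx]
      simp)

/-- The map induced in cohomology by the projection `p : (V, δ) → (V / range d, δ̄)`,
from `(ker δ) / range δ` to `(ker δ̄) / range δ̄`. -/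
noncomputable def cohProj (d δ : V →ₗ[ℂ] V) (hanti : d ∘ₗ δ = -(δ ∘ₗ d)) :
    ((LinearMap.ker δ : Submodule ℂ V) ⧸
        (LinearMap.range δ).comap (LinearMap.ker δ).subtype) →ₗ[ℂ]
      ((LinearMap.ker (deltaBar d δ hanti) : Submodule ℂ (V ⧸ LinearMap.range d)) ⧸
        (LinearMap.range (deltaBar d δ hanti)).comap
          (LinearMap.ker (deltaBar d δ hanti)).subtype) :=
  Submodule.mapQ _ _ (kerProj d δ hanti) (by
    intro x hx
    simp only [Submodule.mem_comap, LinearMap.mem_range, Submodule.coe_subtype] at hx ⊢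
    obtain ⟨y, hy⟩ := hx
    refine ⟨(LinearMap.range d).mkQ y, ?_⟩
    have : (kerProj d δ hanti x : V ⧸ LinearMap.range d) = (LinearMap.range d).mkQ (x : V) := rfl
    rw [this, deltaBar, Submodule.mkQ_apply, Submodule.mkQ_apply, Submodule.mapQ_apply, hy])

/-- Injectivity characterization from the proof of Theorem 4.2 (algebraic form): the
map induced in cohomology by the projection `p : (V, δ) → (V / range d, δ̄)` is
injective iff `range d ⊓ ker δ = range d ⊓ range δ`. -/
theorem stmt6 {V : Type*} [AddCommGroup V] [Module ℂ V]
    (d δ : V →ₗ[ℂ] V)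
    (hdd : d ∘ₗ d = 0)
    (hδδ : δ ∘ₗ δ = 0)
    (hanti : d ∘ₗ δ = -(δ ∘ₗ d)) :
    Function.Injective (cohProj d δ hanti) ↔
      LinearMap.range d ⊓ LinearMap.ker δ = LinearMap.range d ⊓ LinearMap.range δ := by
  constructor
  · intro hinj
    refine le_antisymm ?_ ?_
    · rintro x ⟨⟨z, rfl⟩, hxk⟩
      refine ⟨⟨z, rfl⟩, ?_⟩
      -- x = d z ∈ ker δ; show d z ∈ range δ via injectivity
      set X : (LinearMap.ker δ : Submodule ℂ V) := ⟨d z, hxk⟩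
      have hK : kerProj d δ hanti X = 0 := by
        apply Subtype.ext
        show (LinearMap.range d).mkQ (d z) = 0
        simp [Submodule.Quotient.mk_eq_zero]
      have h0 : cohProj d δ hanti (Submodule.Quotient.mk X) = 0 := by
        rw [cohProj, Submodule.mapQ_apply, hK]
        simp
      have := hinj (by rw [h0, map_zero] :
        cohProj d δ hanti (Submodule.Quotient.mk X) = cohProj d δ hanti 0)
      exact (Submodule.Quotient.mk_eq_zero
        ((LinearMap.range δ).comap (LinearMap.ker δ).subtype)).mp this
    · rintro x ⟨hd, y, rfl⟩
      exact ⟨hd, congrFun (congrArg DFunLike.coe hδδ) y⟩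
  · intro h
    rw [← LinearMap.ker_eq_bot, LinearMap.ker_eq_bot']
    intro a ha
    obtain ⟨X, rfl⟩ := Submodule.Quotient.mk_surjective _ a
    rw [cohProj, Submodule.mapQ_apply, Submodule.Quotient.mk_eq_zero] at ha
    rw [Submodule.Quotient.mk_eq_zero]
    -- ha : kerProj X ∈ comap subtype (range δ̄)
    obtain ⟨w, hw⟩ := ha
    obtain ⟨y, rfl⟩ := Submodule.Quotient.mk_surjective _ w
    have hw' : (LinearMap.range d).mkQ (δ y) = (LinearMap.range d).mkQ (X : V) := by
      have h1 : ((kerProj d δ hanti X : _) : V ⧸ LinearMap.range d)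
          = (LinearMap.range d).mkQ (X : V) := rfl
      have h2 : deltaBar d δ hanti (Submodule.Quotient.mk y)
          = (LinearMap.range d).mkQ (δ y) := by
        rw [deltaBar, Submodule.mapQ_apply]; rfl
      exact h2.symm.trans (hw.trans h1)
    have hsub : (X : V) - δ y ∈ LinearMap.range d := by
      rw [← Submodule.Quotient.mk_eq_zero]
      have := sub_eq_zero.mpr hw'.symm
      rw [← map_sub] at this
      exact this
    have hker : (X : V) - δ y ∈ LinearMap.ker δ := by
      have hX : δ (X : V) = 0 := X.2
      have hδy : δ (δ y) = 0 := congrFun (congrArg DFunLike.coe hδδ) y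
      simp [LinearMap.mem_ker, map_sub, hX, hδy]
    have : (X : V) - δ y ∈ LinearMap.range d ⊓ LinearMap.range δ := by
      rw [← h]; exact ⟨hsub, hker⟩
    obtain ⟨-, z, hz⟩ := this
    refine ⟨y + z, ?_⟩
    have : δ (y + z) = δ y + ((X : V) - δ y) := by rw [map_add, hz]
    simpa using this
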